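/- arXiv:2407.18511 — 5 statements merged into one kernel-verified Lean document; each statement's English description precedes it below -/
import Mathlib

section
/- Let m ≥ 1, let ρ̌ > 0 and ρ̂ > 0 with ρ̂/ρ̌ an integer ≥ 2, and let R(M̌) := B_{ρ̂/2}(M̌) ∩ Δ_ρ̂ for nonempty M̌ ⊆ Δ_ρ̌. Then: (i) if M̌ ⊆ Δ_ρ̌ is nonempty and connected (any two points of M̌ are joined by a path with step size ρ̌ lying entirely in M̌), then R(M̌) is connected in Δ_ρ̂ (any two points of R(M̌) are joined by a path with step size ρ̂ lying entirely in R(M̌)); and (ii) for every nonempty M̌ ⊆ Δ_ρ̌, ∂^0_ρ̂ R(M̌) ⊆ R(∂^0_ρ̌ M̌) whenever ∂^0_ρ̌ M̌ ≠ ∅, and more precisely ∂^0_ρ̂ R(M̌) ⊆ B_{ρ̂/2}(∂^0_ρ̌ M̌) ∩ Δ_ρ̂. -/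
noncomputable section

/-- The grid `Δ_ρ = ρℤ^m` in `ℝ^m` (with the maximum norm). -/
def grid (m : ℕ) (ρ : ℝ) : Set (Fin m → ℝ) := {x | ∀ j, ∃ k : ℤ, x j = ρ * k}

/-- `B_δ(A)`: the closed `δ`-neighbourhood of `A` in the maximum norm. -/
def nbhd (m : ℕ) (δ : ℝ) (A : Set (Fin m → ℝ)) : Set (Fin m → ℝ) :=
  {x | Metric.infDist x A ≤ δ}

/-- The restriction operator `R(M̌) = B_{ρ̂/2}(M̌) ∩ Δ_ρ̂`. -/
def Rop (m : ℕ) (rh : ℝ) (M : Set (Fin m → ℝ)) : Set (Fin m → ℝ) :=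
  nbhd m (rh / 2) M ∩ grid m rh

/-- The interpolation operator `I(M̂) = B_{ρ̂/2}(M̂) ∩ Δ_ρ̌`. -/
def Iop (m : ℕ) (rc rh : ℝ) (M : Set (Fin m → ℝ)) : Set (Fin m → ℝ) :=
  nbhd m (rh / 2) M ∩ grid m rc

/-- `p` is a path of length `k` from `x` to `z` in the grid `Δ_ρ` with step size at most `ρ`. -/
def IsPath (m : ℕ) (ρ : ℝ) (x z : Fin m → ℝ) (k : ℕ) (p : ℕ → Fin m → ℝ) : Prop :=
  p 0 = x ∧ p k = z ∧ (∀ ℓ ≤ k, p ℓ ∈ grid m ρ) ∧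
  ∀ ℓ, 1 ≤ ℓ → ℓ ≤ k → dist (p ℓ) (p (ℓ - 1)) ≤ ρ

/-- `M` is connected in `Δ_ρ`: any two of its points are joined by a path with step
size `ρ` lying entirely in `M`. -/
def Conn (m : ℕ) (ρ : ℝ) (M : Set (Fin m → ℝ)) : Prop :=
  ∀ x ∈ M, ∀ z ∈ M, ∃ (k : ℕ) (p : ℕ → Fin m → ℝ),
    IsPath m ρ x z k p ∧ ∀ ℓ ≤ k, p ℓ ∈ M

/-- `∂⁰_ρ M`: points of `M` having a grid neighbour in the complement at distance `ρ`. -/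
def bdry0 (m : ℕ) (ρ : ℝ) (M : Set (Fin m → ℝ)) : Set (Fin m → ℝ) :=
  {x | x ∈ M ∧ ∃ z ∈ Mᶜ ∩ grid m ρ, dist x z = ρ}


lemma pi_dist_le' {m : ℕ} (x y : Fin m → ℝ) {r : ℝ} (hr : 0 ≤ r)
    (h : ∀ j, |x j - y j| ≤ r) : dist x y ≤ r := by
  rw [dist_pi_le_iff hr]
  intro i; rw [Real.dist_eq]; exact h i

lemma coord_le_dist {m : ℕ} (x y : Fin m → ℝ) (j : Fin m) :
    |x j - y j| ≤ dist x y := by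
  have := dist_le_pi_dist x y j
  rwa [Real.dist_eq] at this

lemma grid_sub {m n : ℕ} {rc rh : ℝ} (hq : rh = (n : ℝ) * rc) :
    grid m rh ⊆ grid m rc := by
  intro x hx j
  obtain ⟨k, hk⟩ := hx j
  exact ⟨n * k, by rw [hk, hq]; push_cast; ring⟩

lemma quant {m : ℕ} {rc : ℝ} (hrc : 0 < rc) {x y : Fin m → ℝ}
    (h : ∀ j, ∃ a : ℤ, x j - y j = rc * a) (N : ℕ)
    (hd : dist x y < rc * (N + 1)) : dist x y ≤ rc * N := by
  apply pi_dist_le' x y (by positivity)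
  intro j
  obtain ⟨a, ha⟩ := h j
  have h1 : |x j - y j| < rc * (N + 1) := lt_of_le_of_lt (coord_le_dist x y j) hd
  rw [ha, abs_mul, abs_of_pos hrc] at h1 ⊢
  have hcast : |(a : ℝ)| = (a.natAbs : ℝ) := by rw [Nat.cast_natAbs, Int.cast_abs]
  rw [hcast] at h1 ⊢
  have h2 : (a.natAbs : ℝ) < (N : ℝ) + 1 := by nlinarith
  have h3 : a.natAbs ≤ N := by exact_mod_cast Nat.lt_succ_iff.mp (by exact_mod_cast h2)
  have h4 : (a.natAbs : ℝ) ≤ N := by exact_mod_cast h3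
  nlinarith

lemma near_pt {m : ℕ} {rc rh : ℝ} (hrc : 0 < rc) {n : ℕ} (hn : 2 ≤ n)
    (hq : rh = (n : ℝ) * rc) {M : Set (Fin m → ℝ)} (hM : M ⊆ grid m rc)
    (hne : M.Nonempty) {x : Fin m → ℝ} (hx : x ∈ grid m rc)
    (hd : Metric.infDist x M ≤ rh / 2) :
    ∃ y ∈ M, dist x y ≤ ((n / 2 : ℕ) : ℝ) * rc := by
  have hnat : n < 2 * (n / 2) + 2 := by omega
  have hlt : rh / 2 < rc * (((n / 2 : ℕ) : ℝ) + 1) := by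
    have : (n : ℝ) < 2 * ((n / 2 : ℕ) : ℝ) + 2 := by exact_mod_cast hnat
    rw [hq]; nlinarith
  obtain ⟨y, hyM, hy⟩ := (Metric.infDist_lt_iff hne).mp (lt_of_le_of_lt hd hlt)
  refine ⟨y, hyM, ?_⟩
  have hint : ∀ j, ∃ a : ℤ, x j - y j = rc * a := by
    intro j
    obtain ⟨k1, hk1⟩ := hx j
    obtain ⟨k2, hk2⟩ := hM hyM j
    exact ⟨k1 - k2, by rw [hk1, hk2]; push_cast; ring⟩
  rw [mul_comm]
  exact quant hrc hint (n / 2) hy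

def rnd (rh t : ℝ) : ℝ := rh * ⌊t / rh + 1 / 2⌋

lemma rnd_grid (rh t : ℝ) : ∃ k : ℤ, rnd rh t = rh * k := ⟨_, rfl⟩

lemma rnd_close {rh : ℝ} (hrh : 0 < rh) (t : ℝ) : |rnd rh t - t| ≤ rh / 2 := by
  have h1 : ((⌊t / rh + 1 / 2⌋ : ℤ) : ℝ) ≤ t / rh + 1 / 2 := Int.floor_le _
  have h2 : t / rh + 1 / 2 - 1 < ((⌊t / rh + 1 / 2⌋ : ℤ) : ℝ) := Int.sub_one_lt_floor _
  have ht : rh * (t / rh) = t := by field_simp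
  rw [abs_le]; unfold rnd
  constructor <;> nlinarith

lemma rnd_lip {rh : ℝ} (hrh : 0 < rh) {s t : ℝ} (h : |s - t| ≤ rh) :
    |rnd rh s - rnd rh t| ≤ rh := by
  rw [abs_le] at h
  have key : ∀ u v : ℝ, u - v ≤ rh → ⌊u / rh + 1 / 2⌋ ≤ ⌊v / rh + 1 / 2⌋ + 1 := by
    intro u v huv
    have h0 : u / rh ≤ (v + rh) / rh := by gcongr <;> linarith
    have h0' : (v + rh) / rh = v / rh + 1 := by field_simp
    have : u / rh + 1 / 2 ≤ (v / rh + 1 / 2) + 1 := by rw [h0'] at h0; linarith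
    calc ⌊u / rh + 1 / 2⌋ ≤ ⌊(v / rh + 1 / 2) + 1⌋ := Int.floor_le_floor this
      _ = ⌊v / rh + 1 / 2⌋ + 1 := Int.floor_add_one _
  have h1 := key s t (by linarith)
  have h2 := key t s (by linarith)
  have e1 : ((⌊s / rh + 1 / 2⌋ : ℤ) : ℝ) ≤ ((⌊t / rh + 1 / 2⌋ : ℤ) : ℝ) + 1 := by exact_mod_cast h1
  have e2 : ((⌊t / rh + 1 / 2⌋ : ℤ) : ℝ) ≤ ((⌊s / rh + 1 / 2⌋ : ℤ) : ℝ) + 1 := by exact_mod_cast h2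
  unfold rnd
  rw [abs_le]
  constructor <;> nlinarith

lemma abs_between {u b c v : ℝ} (h1 : min b c ≤ v) (h2 : v ≤ max b c) :
    |u - v| ≤ max |u - b| |u - c| := by
  rcases le_total b c with h | h
  · rw [min_eq_left h] at h1; rw [max_eq_right h] at h2
    rw [abs_le]
    constructor
    · have := neg_abs_le (u - c)
      have := le_max_right |u - b| |u - c|
      linarith
    · have := le_abs_self (u - b)
      have := le_max_left |u - b| |u - c|
      linarith
  · rw [min_eq_right h] at h1; rw [max_eq_left h] at h2
    rw [abs_le]
    constructor
    · have := neg_abs_le (u - b)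
      have := le_max_left |u - b| |u - c|
      linarith
    · have := le_abs_self (u - c)
      have := le_max_right |u - b| |u - c|
      linarith

lemma conn_key {m : ℕ} {rc rh : ℝ} (hrc : 0 < rc) (hrh : 0 < rh)
    {n : ℕ} (hn : 2 ≤ n) (hq : rh = (n : ℝ) * rc)
    {Mc : Set (Fin m → ℝ)} (hMg : Mc ⊆ grid m rc) (hMne : Mc.Nonempty)
    (hconn : Conn m rc Mc) : Conn m rh (Rop m rh Mc) := by
  have hn2 : (2 : ℝ) ≤ (n : ℝ) := by exact_mod_cast hn
  have hrcrh : rc ≤ rh := by rw [hq]; nlinarith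
  have hh2 : ((n / 2 : ℕ) : ℝ) * rc ≤ rh / 2 := by
    have : 2 * (n / 2) ≤ n := by omega
    have h' : 2 * ((n / 2 : ℕ) : ℝ) ≤ (n : ℝ) := by exact_mod_cast this
    rw [hq]; nlinarith
  intro x hx z hz
  obtain ⟨xc, hxcM, hxc⟩ := near_pt hrc hn hq hMg hMne (grid_sub hq hx.2) hx.1
  obtain ⟨zc, hzcM, hzc⟩ := near_pt hrc hn hq hMg hMne (grid_sub hq hz.2) hz.1
  have hxc' : dist x xc ≤ rh / 2 := hxc.trans hh2
  have hzc' : dist z zc ≤ rh / 2 := hzc.trans hh2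
  obtain ⟨k, pc, ⟨hp0, hpk, _hpg, hpstep⟩, hpM⟩ := hconn xc hxcM zc hzcM
  set r : (Fin m → ℝ) → (Fin m → ℝ) := fun y j => rnd rh (y j) with hr
  have hclose : ∀ y : Fin m → ℝ, dist (r y) y ≤ rh / 2 := fun y =>
    pi_dist_le' _ _ (by linarith) (fun j => rnd_close hrh (y j))
  have hlip : ∀ y w : Fin m → ℝ, dist y w ≤ rh → dist (r y) (r w) ≤ rh := fun y w hyw =>
    pi_dist_le' _ _ (by linarith) (fun j => rnd_lip hrh ((coord_le_dist y w j).trans hyw))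
  have hrgrid : ∀ y : Fin m → ℝ, r y ∈ grid m rh := fun y j => ⟨_, rfl⟩
  set p : ℕ → Fin m → ℝ :=
    fun ℓ => if ℓ = 0 then x else if k + 2 ≤ ℓ then z else r (pc (ℓ - 1)) with hp
  have hpmid : ∀ ℓ, 1 ≤ ℓ → ℓ ≤ k + 1 → p ℓ = r (pc (ℓ - 1)) := by
    intro ℓ h1 h2
    simp only [hp]
    rw [if_neg (by omega), if_neg (by omega)]
  have hpzero : p 0 = x := by simp [hp]
  have hplast : p (k + 2) = z := by simp only [hp]; rw [if_neg (by omega), if_pos (by omega)]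
  refine ⟨k + 2, p, ⟨hpzero, hplast, ?_, ?_⟩, ?_⟩
  · -- grid
    intro ℓ _
    rcases Nat.eq_zero_or_pos ℓ with h0 | h1
    · rw [h0, hpzero]; exact hx.2
    rcases le_or_gt (k + 2) ℓ with h2 | h2
    · simp only [hp]; rw [if_neg (by omega), if_pos h2]; exact hz.2
    · rw [hpmid ℓ h1 (by omega)]; exact hrgrid _
  · -- steps
    intro ℓ h1 h2
    rcases eq_or_lt_of_le h1 with h1' | h1'
    · -- ℓ = 1
      rw [← h1', hpmid 1 le_rfl (by omega)]
      simp only [Nat.sub_self]  -- 1 - 1 = 0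
      rw [hpzero, hp0]
      calc dist (r xc) x ≤ dist (r xc) xc + dist xc x := dist_triangle _ _ _
        _ ≤ rh / 2 + rh / 2 := by
            have := hclose xc
            have := dist_comm x xc ▸ hxc'
            rw [dist_comm xc x]; linarith [hclose xc, hxc']
        _ = rh := by ring
    rcases eq_or_lt_of_le h2 with h2' | h2'
    · -- ℓ = k + 2
      rw [h2', hplast]
      have : k + 2 - 1 = k + 1 := by omega
      rw [this, hpmid (k + 1) (by omega) le_rfl]
      have : k + 1 - 1 = k := by omega
      rw [this, hpk]
      calc dist z (r zc) ≤ dist z zc + dist zc (r zc) := dist_triangle _ _ _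
        _ ≤ rh / 2 + rh / 2 := by rw [dist_comm zc (r zc)]; linarith [hclose zc, hzc']
        _ = rh := by ring
    · -- 2 ≤ ℓ ≤ k + 1
      have hℓ2 : 2 ≤ ℓ := h1'
      have hℓk : ℓ ≤ k + 1 := by omega
      rw [hpmid ℓ (by omega) hℓk, hpmid (ℓ - 1) (by omega) (by omega)]
      apply hlip
      have := hpstep (ℓ - 1) (by omega) (by omega)
      have he : ℓ - 1 - 1 = ℓ - 2 := by omega
      rw [he] at this
      have he2 : ℓ - 1 - 1 = ℓ - 2 := by omega
      calc dist (pc (ℓ - 1)) (pc (ℓ - 1 - 1)) = dist (pc (ℓ - 1)) (pc (ℓ - 2)) := by rw [he2]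
        _ ≤ rc := by rw [← he] at this ⊢; exact this
        _ ≤ rh := hrcrh
  · -- membership
    intro ℓ _
    rcases Nat.eq_zero_or_pos ℓ with h0 | h1
    · rw [h0, hpzero]; exact hx
    rcases le_or_gt (k + 2) ℓ with h2 | h2
    · simp only [hp]; rw [if_neg (by omega), if_pos h2]; exact hz
    · rw [hpmid ℓ h1 (by omega)]
      constructor
      · show Metric.infDist _ Mc ≤ rh / 2
        calc Metric.infDist (r (pc (ℓ - 1))) Mc ≤ dist (r (pc (ℓ - 1))) (pc (ℓ - 1)) :=
              Metric.infDist_le_dist_of_mem (hpM (ℓ - 1) (by omega))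
          _ ≤ rh / 2 := hclose _
      · exact hrgrid _

set_option maxHeartbeats 1000000 in
open Classical in
lemma bdry_key {m : ℕ} (hm : 1 ≤ m) {rc rh : ℝ} (hrc : 0 < rc) (hrh : 0 < rh)
    {n : ℕ} (hn : 2 ≤ n) (hq : rh = (n : ℝ) * rc)
    {Mc : Set (Fin m → ℝ)} (hMg : Mc ⊆ grid m rc) (hMne : Mc.Nonempty)
    {x : Fin m → ℝ} (hx : x ∈ bdry0 m rh (Rop m rh Mc)) :
    ∃ w ∈ bdry0 m rc Mc, dist x w ≤ rh / 2 := by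
  haveI : Nonempty (Fin m) := ⟨⟨0, hm⟩⟩
  obtain ⟨hxR, z, hz, hdxz⟩ := hx
  obtain ⟨hznotR, hzg0⟩ := hz
  have hxg : x ∈ grid m rh := hxR.2
  have hxd : Metric.infDist x Mc ≤ rh / 2 := hxR.1
  have hzg : z ∈ grid m rh := hzg0
  have hzn : rh / 2 < Metric.infDist z Mc := by
    by_contra hcon
    push_neg at hcon
    exact hznotR ⟨hcon, hzg⟩
  -- numeric facts about H2 := (n/2)*rc
  set n2 : ℕ := n / 2 with hn2d
  set H2 : ℝ := (n2 : ℝ) * rc with hH2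
  have hnd1 : 2 * n2 ≤ n := by omega
  have hnd1' : 2 * (n2 : ℝ) ≤ (n : ℝ) := by exact_mod_cast hnd1
  have hnd2 : n < 2 * n2 + 2 := by omega
  have hnd2' : (n : ℝ) < 2 * (n2 : ℝ) + 2 := by exact_mod_cast hnd2
  have hnd3 : n2 + 1 ≤ n := by omega
  have hnd3' : (n2 : ℝ) + 1 ≤ (n : ℝ) := by exact_mod_cast hnd3
  have hH2nn : 0 ≤ H2 := by positivity
  have hH2le : H2 ≤ rh / 2 := by rw [hH2, hq]; nlinarith
  have hH2lt : rh / 2 < H2 + rc := by rw [hH2, hq]; nlinarith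
  have hH2rc : H2 + rc ≤ rh := by rw [hH2, hq]; nlinarith
  -- integer coordinates of x and z
  choose K hK using hxg
  choose L hL using hzg
  set e : Fin m → ℤ := fun j => L j - K j with he_def
  have he : ∀ j, z j - x j = rh * (e j : ℝ) := by
    intro j; rw [hK j, hL j, he_def]; push_cast; ring
  have habs : ∀ j, |(e j : ℝ)| ≤ 1 := by
    intro j
    have h1 : |z j - x j| ≤ rh := by
      have := coord_le_dist z x j
      rw [dist_comm] at this
      rw [hdxz] at this; exact this
    rw [he j, abs_mul, abs_of_pos hrh] at h1
    nlinarith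
  -- the intermediate target point zt
  set zt : Fin m → ℝ := fun j => x j + (e j : ℝ) * H2 with hzt_def
  have hzt_x : ∀ j, |x j - zt j| ≤ H2 := by
    intro j
    simp only [hzt_def]
    rw [show x j - (x j + (e j : ℝ) * H2) = -((e j : ℝ) * H2) by ring, abs_neg, abs_mul,
      abs_of_nonneg hH2nn]
    nlinarith [habs j, abs_nonneg ((e j : ℝ))]
  have hzt_grid : zt ∈ grid m rc := by
    intro j
    refine ⟨n * K j + e j * n2, ?_⟩
    simp only [hzt_def]
    rw [hK j, hq, hH2]
    push_cast; ring
  -- a close point of Mc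
  obtain ⟨xc, hxcM, hxc0⟩ := near_pt hrc hn hq hMg hMne (grid_sub hq hxR.2) hxd
  have hxc : dist x xc ≤ H2 := by rw [hH2, hn2d]; exact hxc0
  by_cases hztM : zt ∈ Mc
  · -- Case B : zt itself is a boundary point
    set zt' : Fin m → ℝ := fun j => zt j + (e j : ℝ) * rc with hzt'_def
    have hex : ∃ j, e j ≠ 0 := by
      by_contra hcon
      push_neg at hcon
      have : z = x := by
        funext j
        have := he j
        rw [hcon j] at this
        push_cast at this
        linarith
      rw [this] at hdxz
      rw [dist_self] at hdxz
      linarith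
    obtain ⟨j0, hj0⟩ := hex
    have hj0' : |(e j0 : ℝ)| = 1 := by
      have h1 : (1 : ℝ) ≤ |(e j0 : ℝ)| := by
        have : (1 : ℤ) ≤ |e j0| := Int.one_le_abs hj0
        calc (1:ℝ) ≤ ((|e j0| : ℤ) : ℝ) := by exact_mod_cast this
          _ = |(e j0 : ℝ)| := by push_cast; ring
      linarith [habs j0]
    have hd1 : dist zt zt' = rc := by
      apply le_antisymm
      · apply pi_dist_le' _ _ hrc.le
        intro j
        simp only [hzt'_def]
        rw [show zt j - (zt j + (e j : ℝ) * rc) = -((e j : ℝ) * rc) by ring, abs_neg, abs_mul,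
          abs_of_pos hrc]
        nlinarith [habs j, abs_nonneg ((e j : ℝ))]
      · calc rc = |zt j0 - zt' j0| := by
              simp only [hzt'_def]
              rw [show zt j0 - (zt j0 + (e j0 : ℝ) * rc) = -((e j0 : ℝ) * rc) by ring, abs_neg,
                abs_mul, abs_of_pos hrc, hj0']
              ring
          _ ≤ dist zt zt' := coord_le_dist _ _ _
    have hzt'M : zt' ∉ Mc := by
      intro hmem
      have hle : dist z zt' ≤ rh / 2 := by
        apply pi_dist_le' _ _ (by linarith)
        intro j
        have hzj : z j = x j + rh * (e j : ℝ) := by linarith [he j]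
        have : z j - zt' j = (e j : ℝ) * (rh - H2 - rc) := by
          simp only [hzt'_def, hzt_def]
          rw [hzj]; ring
        rw [this, abs_mul, abs_of_nonneg (by linarith : (0:ℝ) ≤ rh - H2 - rc)]
        have hmul := mul_le_mul_of_nonneg_right (habs j)
          (show (0:ℝ) ≤ rh - H2 - rc by linarith)
        rw [one_mul] at hmul
        linarith
      have := Metric.infDist_le_dist_of_mem (x := z) hmem
      linarith
    have hzt'g : zt' ∈ grid m rc := by
      intro j
      refine ⟨n * K j + e j * (n2 + 1), ?_⟩
      simp only [hzt'_def, hzt_def]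
      rw [hK j, hq, hH2]
      push_cast; ring
    refine ⟨zt, ⟨hztM, zt', ⟨hzt'M, hzt'g⟩, hd1⟩, ?_⟩
    exact (pi_dist_le' _ _ hH2nn hzt_x).trans hH2le
  · -- Case A : walk from xc to zt
    choose c hc using fun j => hMg hxcM j
    set b : Fin m → ℤ := fun j => n * K j + e j * n2 - c j with hb_def
    have hb : ∀ j, zt j - xc j = rc * (b j : ℝ) := by
      intro j
      simp only [hzt_def, hb_def]
      rw [hK j, hc j, hq, hH2]
      push_cast; ring
    set A : Fin m → ℕ := fun j => (b j).natAbs with hA_def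
    set k : ℕ := Finset.univ.sup A with hk_def
    have hAk : ∀ j, A j ≤ k := fun j => Finset.le_sup (Finset.mem_univ j)
    obtain ⟨j0, _, hj0⟩ := Finset.exists_mem_eq_sup Finset.univ Finset.univ_nonempty A
    set q : ℕ → Fin m → ℝ :=
      fun ℓ j => xc j + rc * ((b j).sign : ℝ) * ((min ℓ (A j) : ℕ) : ℝ) with hq_def
    have hsA : ∀ j, ((b j).sign : ℝ) * ((A j : ℕ) : ℝ) = (b j : ℝ) := by
      intro j
      show ((b j).sign : ℝ) * (((b j).natAbs : ℕ) : ℝ) = (b j : ℝ)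
      have h : ((((b j).sign * |b j| : ℤ)) : ℝ) = ((b j : ℤ) : ℝ) :=
        congrArg _ (Int.sign_mul_abs (b j))
      push_cast at h
      rw [Nat.cast_natAbs, Int.cast_abs]
      exact h
    have hs_abs : ∀ j, |((b j).sign : ℝ)| ≤ 1 := by
      intro j
      rcases lt_trichotomy (b j) 0 with h | h | h
      · rw [Int.sign_eq_neg_one_of_neg h]; norm_num
      · rw [h]; norm_num
      · rw [Int.sign_eq_one_of_pos h]; norm_num
    have hq0 : q 0 = xc := by
      funext j; simp [hq_def]
    have hqk : q k = zt := by
      funext j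
      simp only [hq_def]
      rw [min_eq_right (hAk j), mul_assoc, hsA j]
      linarith [hb j]
    -- betweenness : every point of the walk is within H2 of x
    have hbtwn : ∀ ℓ j, |x j - q ℓ j| ≤ H2 := by
      intro ℓ j
      have hmm : min (xc j) (zt j) ≤ q ℓ j ∧ q ℓ j ≤ max (xc j) (zt j) := by
        have hmle : ((min ℓ (A j) : ℕ) : ℝ) ≤ ((A j : ℕ) : ℝ) := by
          exact_mod_cast min_le_right ℓ (A j)
        have hmnn : (0:ℝ) ≤ ((min ℓ (A j) : ℕ) : ℝ) := Nat.cast_nonneg _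
        have hzt_eq : zt j = xc j + rc * (((b j).sign : ℝ) * (A j : ℝ)) := by
          rw [hsA j]; linarith [hb j]
        simp only [hq_def]
        rcases le_or_gt 0 (((b j).sign : ℝ)) with hs | hs
        · constructor
          · calc min (xc j) (zt j) ≤ xc j := min_le_left _ _
              _ ≤ xc j + rc * ((b j).sign : ℝ) * ((min ℓ (A j) : ℕ) : ℝ) := by
                  nlinarith [mul_nonneg (mul_nonneg hrc.le hs) hmnn]
          · calc xc j + rc * ((b j).sign : ℝ) * ((min ℓ (A j) : ℕ) : ℝ) ≤ zt j := by
                  rw [hzt_eq]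
                  nlinarith [mul_le_mul_of_nonneg_left hmle (mul_nonneg hrc.le hs)]
              _ ≤ max (xc j) (zt j) := le_max_right _ _
        · constructor
          · calc min (xc j) (zt j) ≤ zt j := min_le_right _ _
              _ ≤ xc j + rc * ((b j).sign : ℝ) * ((min ℓ (A j) : ℕ) : ℝ) := by
                  rw [hzt_eq]
                  nlinarith [mul_le_mul_of_nonneg_left
                    (mul_le_mul_of_nonpos_left hmle hs.le) hrc.le]
          · calc xc j + rc * ((b j).sign : ℝ) * ((min ℓ (A j) : ℕ) : ℝ) ≤ xc j := by
                  nlinarith [mul_nonneg (mul_nonneg hrc.le hmnn) (neg_nonneg.mpr hs.le)]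
              _ ≤ max (xc j) (zt j) := le_max_left _ _
      have h1 := abs_between (u := x j) hmm.1 hmm.2
      have h2 : |x j - xc j| ≤ H2 := (coord_le_dist x xc j).trans hxc
      have h3 := hzt_x j
      calc |x j - q ℓ j| ≤ max |x j - xc j| |x j - zt j| := h1
        _ ≤ H2 := max_le h2 h3
    have hqgrid : ∀ ℓ, q ℓ ∈ grid m rc := by
      intro ℓ j
      refine ⟨c j + (b j).sign * (min ℓ (A j) : ℕ), ?_⟩
      simp only [hq_def]
      rw [hc j]
      push_cast; ring
    have hstep : ∀ ℓ j, |q ℓ j - q (ℓ + 1) j| ≤ rc := by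
      intro ℓ j
      simp only [hq_def]
      have h1 : min ℓ (A j) ≤ min (ℓ + 1) (A j) := by omega
      have h2 : min (ℓ + 1) (A j) ≤ min ℓ (A j) + 1 := by omega
      have h1' : ((min ℓ (A j) : ℕ) : ℝ) ≤ ((min (ℓ + 1) (A j) : ℕ) : ℝ) := by exact_mod_cast h1
      have h2' : ((min (ℓ + 1) (A j) : ℕ) : ℝ) ≤ ((min ℓ (A j) : ℕ) : ℝ) + 1 := by
        exact_mod_cast h2
      have : xc j + rc * ((b j).sign : ℝ) * ((min ℓ (A j) : ℕ) : ℝ) -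
          (xc j + rc * ((b j).sign : ℝ) * ((min (ℓ + 1) (A j) : ℕ) : ℝ)) =
          rc * ((b j).sign : ℝ) * (((min ℓ (A j) : ℕ) : ℝ) - ((min (ℓ + 1) (A j) : ℕ) : ℝ)) := by
        ring
      rw [this, abs_mul, abs_mul, abs_of_pos hrc]
      have habs2 : |((min ℓ (A j) : ℕ) : ℝ) - ((min (ℓ + 1) (A j) : ℕ) : ℝ)| ≤ 1 := by
        rw [abs_le]; constructor <;> linarith
      nlinarith [mul_le_mul (hs_abs j) habs2 (abs_nonneg _) (by norm_num : (0:ℝ) ≤ 1), hrc.le,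
        mul_le_mul_of_nonneg_left
          (mul_le_mul (hs_abs j) habs2 (abs_nonneg _) (by norm_num : (0:ℝ) ≤ 1)) hrc.le]
    -- find the crossing point
    have hkout : q k ∉ Mc := by rw [hqk]; exact hztM
    have hPex : ∃ ℓ, q ℓ ∉ Mc := ⟨k, hkout⟩
    set ℓs : ℕ := Nat.find hPex with hℓs_def
    have hfind : q ℓs ∉ Mc := Nat.find_spec hPex
    have hle : ℓs ≤ k := Nat.find_min' hPex hkout
    have hpos : 1 ≤ ℓs := by
      rcases Nat.eq_zero_or_pos ℓs with h0 | h1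
      · exfalso; apply hfind; rw [h0, hq0]; exact hxcM
      · exact h1
    have hprev : q (ℓs - 1) ∈ Mc := by
      have := Nat.find_min hPex (show ℓs - 1 < ℓs by omega)
      exact not_not.mp this
    -- the step from q (ℓs - 1) to q ℓs has length exactly rc
    have hsub : ℓs - 1 + 1 = ℓs := by omega
    have hj0k : A j0 = k := hj0.symm
    have hexact : dist (q (ℓs - 1)) (q ℓs) = rc := by
      apply le_antisymm
      · apply pi_dist_le' _ _ hrc.le
        intro j
        have := hstep (ℓs - 1) j
        rwa [hsub] at this
      · have hcoord : |q (ℓs - 1) j0 - q ℓs j0| = rc := by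
          simp only [hq_def]
          have hm1 : min (ℓs - 1) (A j0) = ℓs - 1 := by rw [hj0k]; omega
          have hm2 : min ℓs (A j0) = ℓs := by rw [hj0k]; omega
          rw [hm1, hm2]
          have hsgn : |((b j0).sign : ℝ)| = 1 := by
            have hbne : b j0 ≠ 0 := by
              intro hcon
              have : A j0 = 0 := by rw [hA_def]; simp [hcon]
              omega
            rcases lt_trichotomy (b j0) 0 with h | h | h
            · rw [Int.sign_eq_neg_one_of_neg h]; norm_num
            · exact absurd h hbne
            · rw [Int.sign_eq_one_of_pos h]; norm_num
          have hcast : ((ℓs : ℝ)) - ((ℓs - 1 : ℕ) : ℝ) = 1 := by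
            have : (ℓs - 1 : ℕ) + 1 = ℓs := hsub
            have := congrArg (Nat.cast : ℕ → ℝ) this
            push_cast at this
            linarith
          have heq : xc j0 + rc * ((b j0).sign : ℝ) * (((ℓs - 1 : ℕ) : ℕ) : ℝ) -
              (xc j0 + rc * ((b j0).sign : ℝ) * ((ℓs : ℕ) : ℝ)) =
              -(rc * ((b j0).sign : ℝ)) := by
            linear_combination (-(rc * (((b j0).sign : ℤ) : ℝ))) * hcast
          rw [heq, abs_neg, abs_mul, abs_of_pos hrc, hsgn, mul_one]
        calc rc = |q (ℓs - 1) j0 - q ℓs j0| := hcoord.symm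
          _ ≤ dist (q (ℓs - 1)) (q ℓs) := coord_le_dist _ _ _
    refine ⟨q (ℓs - 1), ⟨hprev, q ℓs, ⟨hfind, hqgrid ℓs⟩, hexact⟩, ?_⟩
    exact (pi_dist_le' _ _ hH2nn (fun j => hbtwn (ℓs - 1) j)).trans hH2le

theorem stmt15 (m : ℕ) (hm : 1 ≤ m) (rc rh : ℝ) (hrc : 0 < rc) (hrh : 0 < rh)
    (n : ℕ) (hn : 2 ≤ n) (hq : rh = (n : ℝ) * rc) :
    -- (i) `R` maps connected sets to connected sets
    (∀ Mc : Set (Fin m → ℝ), Mc ⊆ grid m rc → Mc.Nonempty → Conn m rc Mc →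
      Conn m rh (Rop m rh Mc)) ∧
    -- (ii) the boundary of the image is close to the boundary of the preimage
    (∀ Mc : Set (Fin m → ℝ), Mc ⊆ grid m rc → Mc.Nonempty →
      ((bdry0 m rc Mc ≠ ∅ → bdry0 m rh (Rop m rh Mc) ⊆ Rop m rh (bdry0 m rc Mc)) ∧
        bdry0 m rh (Rop m rh Mc) ⊆ nbhd m (rh / 2) (bdry0 m rc Mc) ∩ grid m rh)) := by
  constructor
  · intro Mc hMg hMne hconn
    exact conn_key hrc hrh hn hq hMg hMne hconn
  · intro Mc hMg hMne
    have key : ∀ x ∈ bdry0 m rh (Rop m rh Mc),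
        x ∈ nbhd m (rh / 2) (bdry0 m rc Mc) ∩ grid m rh := by
      intro x hx
      obtain ⟨w, hwB, hwd⟩ := bdry_key hm hrc hrh hn hq hMg hMne hx
      refine ⟨?_, hx.1.2⟩
      exact le_trans (Metric.infDist_le_dist_of_mem hwB) hwd
    exact ⟨fun _ => key, key⟩
end
end

section
/- Let m ≥ 1, let ρ̌ > 0 and ρ̂ > 0 with ρ̂/ρ̌ an integer ≥ 2, and let I(M̂) := B_{ρ̂/2}(M̂) ∩ Δ_ρ̌ for nonempty M̂ ⊆ Δ_ρ̂. Then for every nonempty M̂ ⊆ Δ_ρ̂: (i) M̂ ⊆ I(M̂) and dist_H(I(M̂), M̂) ≤ ρ̂/2; (ii) B_{ρ̂/2}(M̂) ⊆ B_{ρ̌/2}(I(M̂)), i.e. I(M̂) is a Voronoi cover of M̂ in Δ_ρ̌; and (iii) every nonempty M̌ ⊆ Δ_ρ̌ with B_{ρ̂/2}(M̂) ⊆ B_{ρ̌/2}(M̌) satisfies I(M̂) ⊆ M̌, i.e. I(M̂) is the minimal Voronoi cover. -/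
noncomputable section

/-!
Distinct points of `Δ_ρ` are at distance at least `ρ`. Hence every subset of `Δ_ρ` is closed, so a
point `x` within `nρ/2` of `M ⊆ Δ_ρ` is within `nρ/2` of some `z ∈ M`; rounding every coordinate
of `(x - z)/ρ` to an integer, with halves rounded towards `0` (for odd `n` the other choice could
leave the box of radius `n/2`), gives a point of `Δ_ρ` within `nρ/2` of `z` and within `ρ/2`
of `x`. This is the covering property (ii). Minimality (iii)
follows from the separation again: a point of `I(M̂)` lies within `ρ̌/2` of a cover `M̌ ⊆ Δ_ρ̌`,
so it lies in `M̌`.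
-/

open Metric

section Grid

variable {m : ℕ} {ρ : ℝ}

theorem grid_subset_grid_of_eq_mul {ρ' : ℝ} (k : ℤ) (h : ρ' = k * ρ) :
    grid m ρ' ⊆ grid m ρ := by
  intro x hx j
  obtain ⟨a, ha⟩ := hx j
  exact ⟨k * a, by rw [ha, h]; push_cast; ring⟩

theorem eq_of_mem_grid_of_dist_lt (hρ : 0 < ρ) {x y : Fin m → ℝ} (hx : x ∈ grid m ρ)
    (hy : y ∈ grid m ρ) (hxy : dist x y < ρ) : x = y := by
  funext j
  obtain ⟨a, ha⟩ := hx j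
  obtain ⟨b, hb⟩ := hy j
  have hj : ρ * |((a - b : ℤ) : ℝ)| < ρ * 1 :=
    calc ρ * |((a - b : ℤ) : ℝ)| = dist (x j) (y j) := by
          rw [Real.dist_eq, ha, hb, ← mul_sub, abs_mul, abs_of_pos hρ]; push_cast; ring
      _ ≤ dist x y := dist_le_pi_dist x y j
      _ < ρ * 1 := by rwa [mul_one]
  have hab : |a - b| < 1 := by exact_mod_cast lt_of_mul_lt_mul_left hj hρ.le
  rw [ha, hb, sub_eq_zero.mp (Int.abs_lt_one_iff.mp hab)]

theorem isClosed_of_subset_grid (hρ : 0 < ρ) {A : Set (Fin m → ℝ)} (hA : A ⊆ grid m ρ) :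
    IsClosed A :=
  isClosed_of_pairwise_le_dist hρ fun _ hx _ hy hxy =>
    not_lt.mp fun h => hxy (eq_of_mem_grid_of_dist_lt hρ (hA hx) (hA hy) h)

theorem exists_int_abs_le_and_abs_sub_le (n : ℕ) {s : ℝ} (hs : |s| ≤ n / 2) :
    ∃ r : ℤ, |(r : ℝ)| ≤ n / 2 ∧ |s - r| ≤ 1 / 2 := by
  have round_half_down : ∀ t : ℝ, 0 ≤ t → t ≤ n / 2 →
      ∃ r : ℤ, |(r : ℝ)| ≤ n / 2 ∧ |t - r| ≤ 1 / 2 := by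
    intro t ht0 htn
    set r := ⌈t - 1 / 2⌉
    have hlo : t - 1 / 2 ≤ r := Int.le_ceil _
    have hhi : (r : ℝ) < t - 1 / 2 + 1 := Int.ceil_lt_add_one _
    have hr0 : (-1 : ℤ) < r := Int.lt_ceil.mpr (by push_cast; linarith)
    have hrn : 2 * r < (n : ℤ) + 1 := by exact_mod_cast (by linarith : 2 * (r : ℝ) < n + 1)
    have hr0' : (0 : ℝ) ≤ r := by exact_mod_cast (by omega : 0 ≤ r)
    have hrn' : 2 * (r : ℝ) ≤ n := by exact_mod_cast (by omega : 2 * r ≤ n)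
    refine ⟨r, ?_, ?_⟩
    · rw [abs_of_nonneg hr0']; linarith
    · rw [abs_le]; constructor <;> linarith
  rcases le_total 0 s with hs0 | hs0
  · exact round_half_down s hs0 (le_of_abs_le hs)
  · obtain ⟨r, hr, hsr⟩ := round_half_down (-s) (by linarith) (by rwa [← abs_of_nonpos hs0])
    have hneg : s - ((-r : ℤ) : ℝ) = -(-s - r) := by push_cast; ring
    exact ⟨-r, by rwa [Int.cast_neg, abs_neg], by rwa [hneg, abs_neg]⟩

theorem exists_mem_grid_dist_le (n : ℕ) (hρ : 0 < ρ) {x z : Fin m → ℝ} (hz : z ∈ grid m ρ)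
    (hxz : dist x z ≤ n * ρ / 2) :
    ∃ y ∈ grid m ρ, dist y z ≤ n * ρ / 2 ∧ dist x y ≤ ρ / 2 := by
  have hcoord : ∀ j, |(x j - z j) / ρ| ≤ n / 2 := fun j => by
    rw [abs_div, abs_of_pos hρ, div_le_iff₀ hρ]
    calc |x j - z j| = dist (x j) (z j) := (Real.dist_eq _ _).symm
      _ ≤ dist x z := dist_le_pi_dist x z j
      _ ≤ n / 2 * ρ := by linarith
  choose r hr hxr using fun j => exists_int_abs_le_and_abs_sub_le n (hcoord j)
  refine ⟨fun j => z j + ρ * r j, fun j => ?_, ?_, ?_⟩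
  · obtain ⟨k, hk⟩ := hz j
    exact ⟨k + r j, by simp only [hk]; push_cast; ring⟩
  · refine (dist_pi_le_iff (by positivity)).mpr fun j => ?_
    rw [Real.dist_eq, add_sub_cancel_left, abs_mul, abs_of_pos hρ]
    calc ρ * |(r j : ℝ)| ≤ ρ * (n / 2) := by gcongr; exact hr j
      _ = n * ρ / 2 := by ring
  · refine (dist_pi_le_iff (by positivity)).mpr fun j => ?_
    have hxj : x j - (z j + ρ * r j) = ρ * ((x j - z j) / ρ - r j) := by field_simp; ring
    rw [Real.dist_eq, hxj, abs_mul, abs_of_pos hρ]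
    calc ρ * |(x j - z j) / ρ - r j| ≤ ρ * (1 / 2) := by gcongr; exact hxr j
      _ = ρ / 2 := by ring

end Grid

section Neighbourhood

variable {m : ℕ} {δ : ℝ} {A B : Set (Fin m → ℝ)}

theorem subset_nbhd (hδ : 0 ≤ δ) : A ⊆ nbhd m δ A := fun x hx => by
  simpa [nbhd, infDist_zero_of_mem hx] using hδ

theorem hausdorffEDist_le_of_subset_of_subset_nbhd (hB : B.Nonempty) (hδ : 0 ≤ δ)
    (hBA : B ⊆ A) (hA : A ⊆ nbhd m δ B) :
    hausdorffEDist A B ≤ ENNReal.ofReal δ := by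
  apply hausdorffEDist_le_of_infEDist
  · intro x hx
    exact (ENNReal.le_ofReal_iff_toReal_le (infEDist_ne_top hB) hδ).mpr (hA hx)
  · intro x hx
    rw [infEDist_zero_of_mem (hBA hx)]
    exact zero_le

end Neighbourhood

section Interpolation

variable {m : ℕ} {ρ ρ' : ℝ} {M : Set (Fin m → ℝ)}

theorem nbhd_subset_nbhd_Iop (n : ℕ) (hρ : 0 < ρ) (hM : M ⊆ grid m ρ) (hne : M.Nonempty) :
    nbhd m (n * ρ / 2) M ⊆ nbhd m (ρ / 2) (Iop m ρ (n * ρ) M) := by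
  intro x hx
  obtain ⟨z, hz, hxz⟩ := (isClosed_of_subset_grid hρ hM).exists_infDist_eq_dist hne x
  obtain ⟨y, hy, hyz, hxy⟩ :=
    exists_mem_grid_dist_le n hρ (hM hz) (hxz ▸ hx : dist x z ≤ n * ρ / 2)
  have hyI : y ∈ Iop m ρ (n * ρ) M := ⟨(infDist_le_dist_of_mem hz).trans hyz, hy⟩
  exact (infDist_le_dist_of_mem hyI).trans hxy

theorem Iop_subset_of_nbhd_subset (hρ : 0 < ρ) {Mc : Set (Fin m → ℝ)} (hMc : Mc ⊆ grid m ρ)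
    (hne : Mc.Nonempty) (hcov : nbhd m (ρ' / 2) M ⊆ nbhd m (ρ / 2) Mc) :
    Iop m ρ ρ' M ⊆ Mc := by
  intro y hy
  have hyMc : infDist y Mc < ρ := (hcov hy.1).trans_lt (by linarith)
  obtain ⟨w, hw, hyw⟩ := (infDist_lt_iff hne).mp hyMc
  rwa [eq_of_mem_grid_of_dist_lt hρ hy.2 (hMc hw) hyw]

end Interpolation

theorem stmt16_general (m : ℕ) (rc rh : ℝ) (hrc : 0 < rc) (hrh : 0 < rh)
    (n : ℕ) (hq : rh = (n : ℝ) * rc)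
    (Mh : Set (Fin m → ℝ)) (hMh : Mh ⊆ grid m rh) (hne : Mh.Nonempty) :
    -- (i) `M̂ ⊆ I(M̂)` and `I(M̂)` is within Hausdorff distance `ρ̂/2` of `M̂`
    (Mh ⊆ Iop m rc rh Mh ∧
      EMetric.hausdorffEdist (Iop m rc rh Mh) Mh ≤ ENNReal.ofReal (rh / 2)) ∧
    -- (ii) `I(M̂)` is a Voronoi cover of `M̂` in `Δ_ρ̌`
    nbhd m (rh / 2) Mh ⊆ nbhd m (rc / 2) (Iop m rc rh Mh) ∧
    -- (iii) `I(M̂)` is contained in every Voronoi cover of `M̂` in `Δ_ρ̌`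
    (∀ Mc : Set (Fin m → ℝ), Mc ⊆ grid m rc → Mc.Nonempty →
      nbhd m (rh / 2) Mh ⊆ nbhd m (rc / 2) Mc → Iop m rc rh Mh ⊆ Mc) := by
  have hMh_rc : Mh ⊆ grid m rc := hMh.trans (grid_subset_grid_of_eq_mul n (by exact_mod_cast hq))
  have hsub : Mh ⊆ Iop m rc rh Mh := fun x hx => ⟨subset_nbhd (by positivity) hx, hMh_rc hx⟩
  refine ⟨⟨hsub, hausdorffEDist_le_of_subset_of_subset_nbhd hne (by positivity) hsub
    fun _ hx => hx.1⟩, ?_, fun _ hg hne' hcov => Iop_subset_of_nbhd_subset hrc hg hne' hcov⟩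
  subst hq
  exact nbhd_subset_nbhd_Iop n hrc hMh_rc hne

theorem stmt16 (m : ℕ) (hm : 1 ≤ m) (rc rh : ℝ) (hrc : 0 < rc) (hrh : 0 < rh)
    (n : ℕ) (hn : 2 ≤ n) (hq : rh = (n : ℝ) * rc)
    (Mh : Set (Fin m → ℝ)) (hMh : Mh ⊆ grid m rh) (hne : Mh.Nonempty) :
    -- (i) `M̂ ⊆ I(M̂)` and `I(M̂)` is within Hausdorff distance `ρ̂/2` of `M̂`
    (Mh ⊆ Iop m rc rh Mh ∧
      EMetric.hausdorffEdist (Iop m rc rh Mh) Mh ≤ ENNReal.ofReal (rh / 2)) ∧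
    -- (ii) `I(M̂)` is a Voronoi cover of `M̂` in `Δ_ρ̌`
    nbhd m (rh / 2) Mh ⊆ nbhd m (rc / 2) (Iop m rc rh Mh) ∧
    -- (iii) `I(M̂)` is contained in every Voronoi cover of `M̂` in `Δ_ρ̌`
    (∀ Mc : Set (Fin m → ℝ), Mc ⊆ grid m rc → Mc.Nonempty →
      nbhd m (rh / 2) Mh ⊆ nbhd m (rc / 2) Mc → Iop m rc rh Mh ⊆ Mc) :=
  stmt16_general m rc rh hrc hrh n hq Mh hMh hne
end
end

section
/- Let m ≥ 1, let ρ̌ > 0 and ρ̂ > 0 with ρ̂/ρ̌ an integer ≥ 2, and let I(M̂) := B_{ρ̂/2}(M̂) ∩ Δ_ρ̌ for nonempty M̂ ⊆ Δ_ρ̂. Then: (i) if M̂ ⊆ Δ_ρ̂ is nonempty and connected (any two points of M̂ are joined by a path with step size ρ̂ lying entirely in M̂), then I(M̂) is connected in Δ_ρ̌ (any two points of I(M̂) are joined by a path with step size ρ̌ lying entirely in I(M̂)); and (ii) for every nonempty M̂ ⊆ Δ_ρ̂, ∂^0_ρ̌ I(M̂) ⊆ B_{ρ̂/2}(∂^0_ρ̂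 M̂) ∩ Δ_ρ̌ (in particular ∂^0_ρ̌ I(M̂) ⊆ I(∂^0_ρ̂ M̂) whenever ∂^0_ρ̂ M̂ ≠ ∅). -/
noncomputable section

namespace Stmt17Aux

/-! ### clamp lemmas -/

lemma clamp_abs_le (c d : ℝ) (hc : 0 ≤ c) : |max (-c) (min c d)| ≤ c := by
  rw [abs_le]
  exact ⟨le_max_left _ _, max_le (by linarith) (min_le_left _ _)⟩

lemma clamp_abs_le' (c d : ℝ) (hc : 0 ≤ c) : |max (-c) (min c d)| ≤ |d| := by
  rcases le_total d 0 with h | h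
  · rw [min_eq_right (h.trans hc), abs_of_nonpos h,
      abs_of_nonpos (max_le (by linarith) h)]
    have := le_max_right (-c) d
    linarith
  · rw [max_eq_right (le_trans (by linarith) (le_min hc h)),
      abs_of_nonneg (le_min hc h), abs_of_nonneg h]
    exact min_le_right _ _

lemma clamp_sub_abs (c d D : ℝ) (hc : 0 ≤ c) (hD : |d| ≤ D) :
    |d - max (-c) (min c d)| ≤ max (D - c) 0 := by
  rcases le_total d 0 with h | h
  · rw [min_eq_right (h.trans hc)]
    rcases le_total (-c) d with h2 | h2
    · rw [max_eq_right h2]; simp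
    · rw [max_eq_left h2, abs_le]
      rw [abs_le] at hD
      constructor
      · have := le_max_left (D - c) (0:ℝ); linarith
      · have := le_max_right (D - c) (0:ℝ); linarith
  · rw [max_eq_right (le_trans (by linarith) (le_min hc h))]
    rcases le_total d c with h2 | h2
    · rw [min_eq_right h2]; simp
    · rw [min_eq_left h2, abs_le]
      rw [abs_le] at hD
      constructor
      · have := le_max_right (D - c) (0:ℝ); linarith
      · have := le_max_left (D - c) (0:ℝ); linarith

lemma clamp_step (c c' d : ℝ) (hc : 0 ≤ c) (hcc : c ≤ c') :
    |max (-c') (min c' d) - max (-c) (min c d)| ≤ c' - c := by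
  have hc' : 0 ≤ c' := hc.trans hcc
  rcases le_total d 0 with h | h
  · rw [min_eq_right (h.trans hc), min_eq_right (h.trans hc')]
    rcases le_total (-c) d with h2 | h2
    · rw [max_eq_right h2, max_eq_right (le_trans (by linarith) h2)]
      simpa using (by linarith : (0:ℝ) ≤ c' - c)
    · rw [max_eq_left h2, abs_le]
      have h3 : -c' ≤ max (-c') d := le_max_left _ _
      have h4 : max (-c') d ≤ -c := max_le (by linarith) h2
      constructor <;> linarith
  · rw [max_eq_right (le_trans (by linarith) (le_min hc h)),
      max_eq_right (le_trans (by linarith) (le_min hc' h))]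
    rcases le_total d c with h2 | h2
    · rw [min_eq_right h2, min_eq_right (h2.trans hcc)]
      simpa using (by linarith : (0:ℝ) ≤ c' - c)
    · rw [min_eq_left h2, abs_le]
      have h3 : c ≤ min c' d := le_min hcc h2
      have h4 : min c' d ≤ c' := min_le_left _ _
      constructor <;> linarith

/-! ### the segment path -/

def seg (m : ℕ) (rc : ℝ) (a b : Fin m → ℝ) (t : ℕ) : Fin m → ℝ :=
  fun j => a j + max (-(t*rc)) (min (t*rc) (b j - a j))

lemma seg_zero (m : ℕ) (rc : ℝ) (a b : Fin m → ℝ) : seg m rc a b 0 = a := by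
  funext j
  simp [seg, max_eq_right (min_le_left (0:ℝ) (b j - a j))]

lemma seg_grid (m : ℕ) (rc : ℝ) (hrc : 0 < rc) (a b : Fin m → ℝ)
    (ha : a ∈ grid m rc) (hb : b ∈ grid m rc) (t : ℕ) : seg m rc a b t ∈ grid m rc := by
  intro j
  obtain ⟨k1, hk1⟩ := ha j
  obtain ⟨k2, hk2⟩ := hb j
  refine ⟨k1 + max (-(t:ℤ)) (min (t:ℤ) (k2 - k1)), ?_⟩
  have h1 : b j - a j = rc * ((k2 - k1 : ℤ) : ℝ) := by rw [hk1, hk2]; push_cast; ring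
  have h2 : (t : ℝ) * rc = rc * ((t : ℤ) : ℝ) := by push_cast; ring
  have h3 : -(rc * ((t:ℤ):ℝ)) = rc * ((-(t:ℤ) : ℤ) : ℝ) := by push_cast; ring
  simp only [seg]
  rw [h1, hk1, h2, ← mul_min_of_nonneg _ _ hrc.le, h3, ← mul_max_of_nonneg _ _ hrc.le]
  push_cast
  ring

lemma seg_dist_left (m : ℕ) (rc : ℝ) (hrc : 0 < rc) (a b : Fin m → ℝ) (t : ℕ) :
    dist (seg m rc a b t) a ≤ t * rc := by
  rw [dist_pi_le_iff (by positivity)]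
  intro j
  rw [Real.dist_eq, seg]
  simpa using clamp_abs_le ((t:ℝ)*rc) (b j - a j) (by positivity)

lemma seg_dist_left' (m : ℕ) (rc : ℝ) (hrc : 0 < rc) (a b : Fin m → ℝ) (t : ℕ) :
    dist (seg m rc a b t) a ≤ dist a b := by
  rw [dist_pi_le_iff dist_nonneg]
  intro j
  rw [Real.dist_eq, seg]
  have h1 : |b j - a j| ≤ dist a b := by
    have := dist_le_pi_dist a b j
    rwa [Real.dist_eq, abs_sub_comm] at this
  refine le_trans ?_ h1
  simpa using clamp_abs_le' ((t:ℝ)*rc) (b j - a j) (by positivity)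

lemma seg_dist_right (m : ℕ) (rc : ℝ) (hrc : 0 < rc) (a b : Fin m → ℝ) (t : ℕ) :
    dist (seg m rc a b t) b ≤ max (dist a b - t * rc) 0 := by
  rw [dist_pi_le_iff (le_max_right _ _)]
  intro j
  rw [Real.dist_eq, seg]
  have h1 : |b j - a j| ≤ dist a b := by
    have := dist_le_pi_dist a b j
    rwa [Real.dist_eq, abs_sub_comm] at this
  have := clamp_sub_abs ((t:ℝ)*rc) (b j - a j) (dist a b) (by positivity) h1
  rw [abs_sub_comm] at this
  calc |a j + max (-((t:ℝ)*rc)) (min ((t:ℝ)*rc) (b j - a j)) - b j|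
      = |(b j - a j) - max (-((t:ℝ)*rc)) (min ((t:ℝ)*rc) (b j - a j))| := by
        rw [abs_sub_comm]; ring_nf
    _ ≤ max (dist a b - (t:ℝ)*rc) 0 := clamp_sub_abs _ _ _ (by positivity) h1

lemma seg_end (m : ℕ) (rc : ℝ) (hrc : 0 < rc) (a b : Fin m → ℝ) (t : ℕ)
    (h : dist a b ≤ t * rc) : seg m rc a b t = b := by
  have h2 := seg_dist_right m rc hrc a b t
  rw [max_eq_right (by linarith)] at h2
  have := dist_nonneg (x := seg m rc a b t) (y := b)
  have h3 : dist (seg m rc a b t) b = 0 := le_antisymm h2 this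
  exact dist_eq_zero.mp h3

lemma seg_step (m : ℕ) (rc : ℝ) (hrc : 0 < rc) (a b : Fin m → ℝ) (t : ℕ) :
    dist (seg m rc a b (t+1)) (seg m rc a b t) ≤ rc := by
  rw [dist_pi_le_iff hrc.le]
  intro j
  rw [Real.dist_eq, seg, seg]
  have h := clamp_step ((t:ℝ)*rc) (((t:ℕ)+1:ℝ)*rc) (b j - a j) (by positivity)
    (by nlinarith)
  have e : ((t+1 : ℕ) : ℝ) = (t:ℝ) + 1 := by push_cast; ring
  rw [e]
  calc |a j + max (-(((t:ℝ)+1)*rc)) (min (((t:ℝ)+1)*rc) (b j - a j)) -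
        (a j + max (-((t:ℝ)*rc)) (min ((t:ℝ)*rc) (b j - a j)))|
      = |max (-(((t:ℝ)+1)*rc)) (min (((t:ℝ)+1)*rc) (b j - a j)) -
        max (-((t:ℝ)*rc)) (min ((t:ℝ)*rc) (b j - a j))| := by ring_nf
    _ ≤ ((t:ℝ)+1)*rc - (t:ℝ)*rc := h
    _ = rc := by ring

/-! ### reachability -/

def Reach (m : ℕ) (ρ : ℝ) (M : Set (Fin m → ℝ)) (x z : Fin m → ℝ) : Prop :=
  ∃ (k : ℕ) (p : ℕ → Fin m → ℝ), IsPath m ρ x z k p ∧ ∀ ℓ ≤ k, p ℓ ∈ M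

lemma reach_refl (m : ℕ) (ρ : ℝ) (M : Set (Fin m → ℝ)) (x : Fin m → ℝ)
    (hx : x ∈ M) (hg : x ∈ grid m ρ) : Reach m ρ M x x := by
  refine ⟨0, fun _ => x, ⟨rfl, rfl, fun _ _ => hg, ?_⟩, fun _ _ => hx⟩
  intro ℓ h1 h2; omega

lemma reach_trans (m : ℕ) (ρ : ℝ) (M : Set (Fin m → ℝ)) (x y z : Fin m → ℝ)
    (h1 : Reach m ρ M x y) (h2 : Reach m ρ M y z) : Reach m ρ M x z := by
  obtain ⟨k, p, ⟨hp0, hpk, hpg, hps⟩, hpM⟩ := h1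
  obtain ⟨k', q, ⟨hq0, hqk, hqg, hqs⟩, hqM⟩ := h2
  refine ⟨k + k', fun ℓ => if ℓ < k then p ℓ else q (ℓ - k), ?_, ?_⟩
  · refine ⟨?_, ?_, ?_, ?_⟩
    · by_cases h : 0 < k
      · simp [h, hp0]
      · have hk0 : k = 0 := by omega
        rw [hk0] at hpk
        simp only [if_neg h]
        have e : 0 - k = 0 := by omega
        rw [e]
        rw [hq0, ← hpk]
        exact hp0
    · have h : ¬ (k + k' < k) := by omega
      simp only [h, if_false]
      have : k + k' - k = k' := by omega
      rw [this, hqk]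
    · intro ℓ hℓ
      by_cases h : ℓ < k
      · simp only [h, if_true]; exact hpg ℓ (by omega)
      · simp only [h, if_false]; exact hqg (ℓ - k) (by omega)
    · intro ℓ hℓ1 hℓ2
      by_cases h : ℓ < k
      · have h' : ℓ - 1 < k := by omega
        simp only [h, h', if_true]
        exact hps ℓ hℓ1 (by omega)
      · by_cases h' : ℓ - 1 < k
        · -- ℓ = k, ℓ ≥ 1
          have hek : ℓ = k := by omega
          simp only [if_neg h, if_pos h']
          have e1 : ℓ - k = 0 := by omega
          have e2 : ℓ - 1 = k - 1 := by omega
          rw [e1, e2, hq0, ← hpk]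
          exact hps k (by omega) le_rfl
        · simp only [h, h', if_false]
          have : ℓ - 1 - k = ℓ - k - 1 := by omega
          rw [this]
          exact hqs (ℓ - k) (by omega) (by omega)
  · intro ℓ hℓ
    by_cases h : ℓ < k
    · simp only [h, if_true]; exact hpM ℓ (by omega)
    · simp only [h, if_false]; exact hqM (ℓ - k) (by omega)

lemma reach_seg (m : ℕ) (rc : ℝ) (hrc : 0 < rc) (M : Set (Fin m → ℝ))
    (a b : Fin m → ℝ) (ha : a ∈ grid m rc) (hb : b ∈ grid m rc)
    (T : ℕ) (hd : dist a b ≤ T * rc)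
    (hM : ∀ t ≤ T, seg m rc a b t ∈ M) : Reach m rc M a b := by
  refine ⟨T, seg m rc a b, ⟨seg_zero m rc a b, seg_end m rc hrc a b T hd,
    fun ℓ _ => seg_grid m rc hrc a b ha hb ℓ, ?_⟩, hM⟩
  intro ℓ h1 h2
  have : ℓ = (ℓ - 1) + 1 := by omega
  rw [this]
  simpa using seg_step m rc hrc a b (ℓ - 1)

/-! ### arithmetic on the grids -/

lemma grid_sub (m : ℕ) (n : ℕ) (rc rh : ℝ) (hq : rh = (n:ℝ) * rc) :
    grid m rh ⊆ grid m rc := by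
  intro x hx j
  obtain ⟨k, hk⟩ := hx j
  exact ⟨n * k, by rw [hk, hq]; push_cast; ring⟩

lemma key (rc rh : ℝ) (hrc : 0 < rc) (n : ℕ) (hq : rh = (n:ℝ)*rc) (k : ℤ)
    (h : |rc * k| < rh/2 + rc/2) : |rc * k| ≤ rh/2 := by
  rw [abs_mul, abs_of_pos hrc] at h ⊢
  subst hq
  have h2 : (2 * |k| : ℤ) < (n:ℤ) + 1 := by
    have h4 : (2:ℝ) * |(k:ℝ)| < (n:ℝ) + 1 := by nlinarith
    exact_mod_cast h4
  have h6 : |(k:ℝ)| ≤ (n:ℝ)/2 := by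
    have h5 : (2*|k| : ℤ) ≤ (n:ℤ) := by omega
    have h7 : (2:ℝ)*|(k:ℝ)| ≤ (n:ℝ) := by exact_mod_cast h5
    linarith
  nlinarith [abs_nonneg (k:ℝ)]

lemma exists_close (m : ℕ) (n : ℕ) (rc rh : ℝ) (hrc : 0 < rc) (hrh : 0 < rh)
    (hq : rh = (n:ℝ)*rc) (Mh : Set (Fin m → ℝ)) (hsub : Mh ⊆ grid m rh)
    (hne : Mh.Nonempty) (x : Fin m → ℝ) (hx : x ∈ grid m rc)
    (h : Metric.infDist x Mh ≤ rh/2) : ∃ a ∈ Mh, dist x a ≤ rh/2 := by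
  have h1 : Metric.infDist x Mh < rh/2 + rc/2 := by linarith
  obtain ⟨a, haM, ha⟩ := (Metric.infDist_lt_iff hne).mp h1
  refine ⟨a, haM, ?_⟩
  rw [dist_pi_le_iff (by linarith)]
  intro j
  obtain ⟨k1, hk1⟩ := hx j
  obtain ⟨k2, hk2⟩ := hsub haM j
  have hxa : x j - a j = rc * ((k1 - n*k2 : ℤ):ℝ) := by
    rw [hk1, hk2, hq]; push_cast; ring
  rw [Real.dist_eq, hxa]
  apply key rc rh hrc n hq
  rw [← hxa]
  calc |x j - a j| = dist (x j) (a j) := (Real.dist_eq _ _).symm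
    _ ≤ dist x a := dist_le_pi_dist x a j
    _ < rh/2 + rc/2 := ha

end Stmt17Aux

open Stmt17Aux in
theorem stmt17 (m : ℕ) (hm : 1 ≤ m) (rc rh : ℝ) (hrc : 0 < rc) (hrh : 0 < rh)
    (n : ℕ) (hn : 2 ≤ n) (hq : rh = (n : ℝ) * rc) :
    -- (i) `I` maps connected sets to connected sets
    (∀ Mh : Set (Fin m → ℝ), Mh ⊆ grid m rh → Mh.Nonempty → Conn m rh Mh →
      Conn m rc (Iop m rc rh Mh)) ∧
    -- (ii) the boundary of the image is close to the boundary of the preimage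
    (∀ Mh : Set (Fin m → ℝ), Mh ⊆ grid m rh → Mh.Nonempty →
      (bdry0 m rc (Iop m rc rh Mh) ⊆ nbhd m (rh / 2) (bdry0 m rh Mh) ∩ grid m rc ∧
        (bdry0 m rh Mh ≠ ∅ →
          bdry0 m rc (Iop m rc rh Mh) ⊆ Iop m rc rh (bdry0 m rh Mh)))) := by
  have hn' : (2:ℝ) ≤ (n:ℝ) := by exact_mod_cast hn
  have hrcrh : rc ≤ rh / 2 := by nlinarith
  constructor
  · -- part (i)
    intro Mh hsub hne hconn x hx z hz
    obtain ⟨hx1, hx2⟩ := hx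
    obtain ⟨hz1, hz2⟩ := hz
    obtain ⟨xh, hxhM, hxd⟩ := exists_close m n rc rh hrc hrh hq Mh hsub hne x hx2 hx1
    obtain ⟨zh, hzhM, hzd⟩ := exists_close m n rc rh hrc hrh hq Mh hsub hne z hz2 hz1
    have hgsub : Mh ⊆ grid m rc := fun y hy => grid_sub m n rc rh hq (hsub hy)
    have hIopmem : ∀ y ∈ Mh, y ∈ Iop m rc rh Mh := by
      intro y hy
      refine ⟨?_, hgsub hy⟩
      show Metric.infDist y Mh ≤ rh/2
      have := Metric.infDist_le_dist_of_mem (x := y) hy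
      simp at this
      linarith
    -- step 1 : x to xh
    have r1 : Reach m rc (Iop m rc rh Mh) x xh := by
      apply reach_seg m rc hrc _ x xh hx2 (hgsub hxhM) n (by nlinarith)
      intro t ht
      refine ⟨?_, seg_grid m rc hrc x xh hx2 (hgsub hxhM) t⟩
      show Metric.infDist (seg m rc x xh t) Mh ≤ rh/2
      have h1 := Metric.infDist_le_dist_of_mem (x := seg m rc x xh t) hxhM
      have h2 := seg_dist_right m rc hrc x xh t
      have h3 : max (dist x xh - t*rc) 0 ≤ rh/2 := by
        apply max_le _ (by linarith)
        have : (0:ℝ) ≤ (t:ℝ)*rc := by positivity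
        linarith
      linarith
    -- step 2 : xh along the coarse path to zh
    obtain ⟨K, P, ⟨hP0, hPK, hPg, hPs⟩, hPM⟩ := hconn xh hxhM zh hzhM
    have r2 : ∀ ℓ ≤ K, Reach m rc (Iop m rc rh Mh) xh (P ℓ) := by
      intro ℓ
      induction ℓ with
      | zero =>
        intro _
        rw [hP0]
        exact reach_refl m rc _ xh (hIopmem xh hxhM) (hgsub hxhM)
      | succ ℓ ih =>
        intro hℓ
        have hℓK : ℓ ≤ K := by omega
        refine reach_trans m rc _ xh (P ℓ) (P (ℓ+1)) (ih hℓK) ?_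
        have hPl : P ℓ ∈ Mh := hPM ℓ hℓK
        have hPl1 : P (ℓ+1) ∈ Mh := hPM (ℓ+1) hℓ
        have hdP : dist (P ℓ) (P (ℓ+1)) ≤ (n:ℝ)*rc := by
          have := hPs (ℓ+1) (by omega) hℓ
          simp only [Nat.add_sub_cancel] at this
          rw [dist_comm, ← hq]
          exact this
        apply reach_seg m rc hrc _ _ _ (hgsub hPl) (hgsub hPl1) n hdP
        intro t ht
        refine ⟨?_, seg_grid m rc hrc _ _ (hgsub hPl) (hgsub hPl1) t⟩
        show Metric.infDist (seg m rc (P ℓ) (P (ℓ+1)) t) Mh ≤ rh/2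
        rcases le_or_gt (2*t) n with hc | hc
        · have h1 := Metric.infDist_le_dist_of_mem
            (x := seg m rc (P ℓ) (P (ℓ+1)) t) hPl
          have h2 := seg_dist_left m rc hrc (P ℓ) (P (ℓ+1)) t
          have h3 : (2*t:ℝ) ≤ (n:ℝ) := by exact_mod_cast hc
          have h4 : (t:ℝ)*rc ≤ rh/2 := by rw [hq]; nlinarith
          linarith
        · have h1 := Metric.infDist_le_dist_of_mem
            (x := seg m rc (P ℓ) (P (ℓ+1)) t) hPl1
          have h2 := seg_dist_right m rc hrc (P ℓ) (P (ℓ+1)) t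
          have h3 : (n:ℝ) < 2*t := by exact_mod_cast hc
          have h4 : max (dist (P ℓ) (P (ℓ+1)) - t*rc) 0 ≤ rh/2 := by
            apply max_le _ (by linarith)
            nlinarith
          linarith
    -- step 3 : zh to z
    have r3 : Reach m rc (Iop m rc rh Mh) zh z := by
      apply reach_seg m rc hrc _ zh z (hgsub hzhM) hz2 n
        (by rw [dist_comm]; nlinarith)
      intro t ht
      refine ⟨?_, seg_grid m rc hrc zh z (hgsub hzhM) hz2 t⟩
      show Metric.infDist (seg m rc zh z t) Mh ≤ rh/2
      have h1 := Metric.infDist_le_dist_of_mem (x := seg m rc zh z t) hzhM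
      have h2 := seg_dist_left' m rc hrc zh z t
      have h3 : dist zh z ≤ rh/2 := by rw [dist_comm]; exact hzd
      linarith
    have r2' : Reach m rc (Iop m rc rh Mh) xh zh := hPK ▸ r2 K le_rfl
    exact reach_trans m rc _ x zh z (reach_trans m rc _ x xh zh r1 r2') r3
  · -- part (ii)
    intro Mh hsub hne
    have hmain : bdry0 m rc (Iop m rc rh Mh) ⊆
        nbhd m (rh / 2) (bdry0 m rh Mh) ∩ grid m rc := by
      intro x hx
      obtain ⟨hxI, z, ⟨hznI, hzg⟩, hdxz⟩ := hx
      obtain ⟨hx1, hx2⟩ := hxI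
      obtain ⟨xh, hxhM, hxd⟩ := exists_close m n rc rh hrc hrh hq Mh hsub hne x hx2 hx1
      have hzfar : rh/2 < Metric.infDist z Mh := by
        by_contra h
        push_neg at h
        exact hznI ⟨h, hzg⟩
      have hzxh : rh/2 < dist z xh :=
        lt_of_lt_of_le hzfar (Metric.infDist_le_dist_of_mem hxhM)
      have hzxh2 : dist z xh ≤ rc + rh/2 := by
        calc dist z xh ≤ dist z x + dist x xh := dist_triangle z x xh
          _ ≤ rc + rh/2 := by rw [dist_comm z x, hdxz]; linarith
      have hcoord : ∀ j, |z j - xh j| ≤ rc + rh/2 := by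
        intro j
        calc |z j - xh j| = dist (z j) (xh j) := (Real.dist_eq _ _).symm
          _ ≤ dist z xh := dist_le_pi_dist z xh j
          _ ≤ rc + rh/2 := hzxh2
      have hj0 : ∃ j, rh/2 < |z j - xh j| := by
        by_contra h
        push_neg at h
        have : dist z xh ≤ rh/2 := by
          rw [dist_pi_le_iff (by linarith)]
          intro j
          rw [Real.dist_eq]
          exact h j
        linarith
      obtain ⟨j0, hj0⟩ := hj0
      set zh : Fin m → ℝ := fun j =>
        if rh/2 < z j - xh j then xh j + rh
        else if z j - xh j < -(rh/2) then xh j - rh else xh j with hzhdef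
      have hzhg : zh ∈ grid m rh := by
        intro j
        obtain ⟨k, hk⟩ := hsub hxhM j
        simp only [hzhdef]
        split_ifs
        · exact ⟨k + 1, by rw [hk]; push_cast; ring⟩
        · exact ⟨k - 1, by rw [hk]; push_cast; ring⟩
        · exact ⟨k, hk⟩
      have hzzh : dist z zh ≤ rh/2 := by
        rw [dist_pi_le_iff (by linarith)]
        intro j
        have hcj := hcoord j
        rw [abs_le] at hcj
        rw [Real.dist_eq]
        simp only [hzhdef]
        split_ifs with h1 h2
        · have e : z j - (xh j + rh) = (z j - xh j) - rh := by ring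
          rw [e, abs_le]
          constructor <;> linarith
        · have e : z j - (xh j - rh) = (z j - xh j) + rh := by ring
          rw [e, abs_le]
          constructor <;> linarith
        · rw [abs_le]
          constructor <;> linarith
      have hzhnM : zh ∉ Mh := by
        intro hmem
        have := Metric.infDist_le_dist_of_mem (x := z) hmem
        linarith
      have hdxhzh : dist xh zh = rh := by
        apply le_antisymm
        · rw [dist_pi_le_iff hrh.le]
          intro j
          rw [Real.dist_eq]
          simp only [hzhdef]
          split_ifs
          · have e : xh j - (xh j + rh) = -rh := by ring
            rw [e, abs_neg, abs_of_pos hrh]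
          · have e : xh j - (xh j - rh) = rh := by ring
            rw [e, abs_of_pos hrh]
          · simpa using hrh.le
        · have h1 := dist_le_pi_dist xh zh j0
          have h2 : dist (xh j0) (zh j0) = rh := by
            rw [Real.dist_eq]
            simp only [hzhdef]
            rcases lt_or_ge (rh/2) (z j0 - xh j0) with hc | hc
            · rw [if_pos hc]
              have e : xh j0 - (xh j0 + rh) = -rh := by ring
              rw [e, abs_neg, abs_of_pos hrh]
            · have hc2 : z j0 - xh j0 < -(rh/2) := by
                rcases abs_cases (z j0 - xh j0) with ⟨he, _⟩ | ⟨he, _⟩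
                · exfalso; rw [he] at hj0; linarith
                · linarith [hj0, he ▸ hj0]
              rw [if_neg (by linarith), if_pos hc2]
              have e : xh j0 - (xh j0 - rh) = rh := by ring
              rw [e, abs_of_pos hrh]
          linarith
      refine ⟨?_, hx2⟩
      show Metric.infDist x (bdry0 m rh Mh) ≤ rh/2
      have hmem : xh ∈ bdry0 m rh Mh := ⟨hxhM, zh, ⟨hzhnM, hzhg⟩, hdxhzh⟩
      have := Metric.infDist_le_dist_of_mem (x := x) hmem
      linarith
    exact ⟨hmain, fun _ => hmain⟩
end
end

section
/- Let m ≥ 1, let ρ̌ > 0 and ρ̂ > 0 with ρ̂/ρ̌ an integer ≥ 2, and define R(M̌) := B_{ρ̂/2}(M̌) ∩ Δ_ρ̂ for nonempty M̌ ⊆ Δ_ρ̌ and I(M̂) := B_{ρ̂/2}(M̂) ∩ Δ_ρ̌ for nonempty M̂ ⊆ Δ_ρ̂. Then: (i) if ρ̂/ρ̌ is odd, then R(I(M̂)) = M̂ for every nonempty M̂ ⊆ Δ_ρ̂; (ii) if ρ̂/ρ̌ is even, then R(I(M̂)) = B_ρ̂(M̂) ∩ Δ_ρ̂ for every nonempty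 M̂ ⊆ Δ_ρ̂. -/
noncomputable section

lemma grid_dist_le {m : ℕ} {ρ : ℝ} (hρ : 0 < ρ) {x y : Fin m → ℝ}
    (hx : x ∈ grid m ρ) (hy : y ∈ grid m ρ) {c : ℤ} (hc : 0 ≤ c)
    (h : dist x y < ρ * (c + 1)) : dist x y ≤ ρ * c := by
  have hc' : (0:ℝ) ≤ ρ * c := by
    have : (0:ℝ) ≤ (c:ℝ) := by exact_mod_cast hc
    positivity
  rw [dist_pi_le_iff hc']
  intro j
  obtain ⟨a, ha⟩ := hx j
  obtain ⟨b, hb⟩ := hy j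
  have hj : dist (x j) (y j) < ρ * (c+1) := lt_of_le_of_lt (dist_le_pi_dist x y j) h
  rw [Real.dist_eq, ha, hb, ← mul_sub, abs_mul, abs_of_pos hρ] at hj ⊢
  have h1 : |(a:ℝ) - b| < (c:ℝ) + 1 := by
    have := (mul_lt_mul_iff_right₀ hρ).mp hj
    linarith
  have h2 : |a - b| ≤ c := by
    have h1' : ((|a-b| : ℤ) : ℝ) < ((c + 1 : ℤ) : ℝ) := by push_cast; exact h1
    have := Int.cast_lt.mp h1'
    omega
  have h3 : |(a:ℝ) - b| ≤ (c:ℝ) := by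
    have : ((|a-b| : ℤ) : ℝ) ≤ ((c : ℤ) : ℝ) := by exact_mod_cast h2
    push_cast at this
    linarith
  nlinarith

lemma exists_close {m : ℕ} {ρ : ℝ} (hρ : 0 < ρ) {x : Fin m → ℝ}
    (hx : x ∈ grid m ρ) {A : Set (Fin m → ℝ)} (hA : A ⊆ grid m ρ)
    (hne : A.Nonempty) {c : ℤ} (hc : 0 ≤ c)
    (h : Metric.infDist x A < ρ * (c + 1)) :
    ∃ y ∈ A, dist x y ≤ ρ * c := by
  obtain ⟨y, hyA, hy⟩ := (Metric.infDist_lt_iff hne).mp h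
  exact ⟨y, hyA, grid_dist_le hρ hx (hA hyA) hc hy⟩

theorem stmt18 (m : ℕ) (hm : 1 ≤ m) (rc rh : ℝ) (hrc : 0 < rc) (hrh : 0 < rh)
    (n : ℕ) (hn : 2 ≤ n) (hq : rh = (n : ℝ) * rc) :
    -- (i) if `ρ̂/ρ̌` is odd, then `R ∘ I = id`
    (Odd n → ∀ Mh : Set (Fin m → ℝ), Mh ⊆ grid m rh → Mh.Nonempty →
      Rop m rh (Iop m rc rh Mh) = Mh) ∧
    -- (ii) if `ρ̂/ρ̌` is even, then `R(I(M̂)) = B_ρ̂(M̂) ∩ Δ_ρ̂`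
    (Even n → ∀ Mh : Set (Fin m → ℝ), Mh ⊆ grid m rh → Mh.Nonempty →
      Rop m rh (Iop m rc rh Mh) = nbhd m rh Mh ∩ grid m rh) := by
  have hsub : grid m rh ⊆ grid m rc := by
    intro x hx j
    obtain ⟨a, ha⟩ := hx j
    exact ⟨(n : ℤ) * a, by rw [ha, hq]; push_cast; ring⟩
  constructor
  · -- odd case
    rintro ⟨k, hk⟩ Mh hMg hne
    have hMc : Mh ⊆ grid m rc := fun x hx => hsub (hMg hx)
    have hIsub : Iop m rc rh Mh ⊆ grid m rc := fun x hx => hx.2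
    have hIne : (Iop m rc rh Mh).Nonempty := by
      obtain ⟨y, hy⟩ := hne
      exact ⟨y, by simp [Iop, nbhd, Metric.infDist_zero_of_mem hy, le_of_lt,
        half_pos hrh], hsub (hMg hy)⟩
    have hrh' : rh = (2 * k + 1) * rc := by rw [hq, hk]; push_cast; ring
    have hhalf : rh / 2 < rc * ((k : ℤ) + 1) := by
      rw [hrh']; push_cast; nlinarith
    apply Set.Subset.antisymm
    · rintro x ⟨hxd, hxg⟩
      obtain ⟨z, hz, hdz⟩ := exists_close hrc (hsub hxg) hIsub hIne
        (Int.ofNat_nonneg k) (lt_of_le_of_lt hxd hhalf)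
      obtain ⟨y, hyM, hdy⟩ := exists_close hrc hz.2 hMc hne
        (Int.ofNat_nonneg k) (lt_of_le_of_lt hz.1 hhalf)
      have hxy : dist x y < rh * ((0:ℤ) + 1) := by
        have := dist_triangle x z y
        rw [hrh']
        push_cast at hdz hdy ⊢
        nlinarith
      have := grid_dist_le hrh hxg (hMg hyM) le_rfl hxy
      have hxy0 : x = y := by
        push_cast at this
        exact dist_le_zero.mp (by linarith)
      rw [hxy0]; exact hyM
    · intro x hx
      have hxI : x ∈ Iop m rc rh Mh :=
        ⟨by simp [nbhd, Metric.infDist_zero_of_mem hx, le_of_lt, half_pos hrh],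
          hsub (hMg hx)⟩
      exact ⟨by simp [nbhd, Metric.infDist_zero_of_mem hxI, le_of_lt, half_pos hrh],
        hMg hx⟩
  · -- even case
    rintro ⟨k, hk⟩ Mh hMg hne
    have hk1 : 1 ≤ k := by omega
    have hMc : Mh ⊆ grid m rc := fun x hx => hsub (hMg hx)
    have hIsub : Iop m rc rh Mh ⊆ grid m rc := fun x hx => hx.2
    have hIne : (Iop m rc rh Mh).Nonempty := by
      obtain ⟨y, hy⟩ := hne
      exact ⟨y, by simp [Iop, nbhd, Metric.infDist_zero_of_mem hy, le_of_lt,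
        half_pos hrh], hsub (hMg hy)⟩
    have hrh' : rh = 2 * k * rc := by rw [hq, hk]; push_cast; ring
    have hhalf : rh / 2 < rc * ((k : ℤ) + 1) := by
      rw [hrh']; push_cast; nlinarith
    apply Set.Subset.antisymm
    · rintro x ⟨hxd, hxg⟩
      obtain ⟨z, hz, hdz⟩ := exists_close hrc (hsub hxg) hIsub hIne
        (Int.ofNat_nonneg k) (lt_of_le_of_lt hxd hhalf)
      obtain ⟨y, hyM, hdy⟩ := exists_close hrc hz.2 hMc hne
        (Int.ofNat_nonneg k) (lt_of_le_of_lt hz.1 hhalf)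
      refine ⟨?_, hxg⟩
      have h1 : dist x y ≤ rh := by
        have := dist_triangle x z y
        rw [hrh']; push_cast at hdz hdy ⊢; nlinarith
      exact le_trans (Metric.infDist_le_dist_of_mem hyM) h1
    · rintro x ⟨hxd, hxg⟩
      have hxd2 : Metric.infDist x Mh ≤ rh := hxd
      have hxd' : Metric.infDist x Mh < rh * ((1:ℤ) + 1) := by
        push_cast; nlinarith
      obtain ⟨y, hyM, hdy⟩ := exists_close hrh hxg hMg hne (by norm_num) hxd'
      rw [show ((1:ℤ):ℝ) = 1 by norm_num, mul_one] at hdy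
      set z : Fin m → ℝ := fun j => (x j + y j) / 2 with hzdef
      have hzg : z ∈ grid m rc := by
        intro j
        obtain ⟨a, ha⟩ := hxg j
        obtain ⟨b, hb⟩ := (hMg hyM) j
        refine ⟨(k : ℤ) * (a + b), ?_⟩
        simp only [hzdef, ha, hb, hrh']
        push_cast; ring
      have hcomp : ∀ j, |x j - y j| ≤ rh := by
        intro j
        have := dist_le_pi_dist x y j
        rw [Real.dist_eq] at this
        linarith
      have hxz : dist x z ≤ rh / 2 := by
        rw [dist_pi_le_iff (by positivity)]
        intro j
        rw [Real.dist_eq]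
        have he : x j - z j = (x j - y j) / 2 := by simp [hzdef]; ring
        rw [he, abs_div, abs_two]
        linarith [hcomp j]
      have hzy : dist z y ≤ rh / 2 := by
        rw [dist_pi_le_iff (by positivity)]
        intro j
        rw [Real.dist_eq]
        have he : z j - y j = (x j - y j) / 2 := by simp [hzdef]; ring
        rw [he, abs_div, abs_two]
        linarith [hcomp j]
      have hzI : z ∈ Iop m rc rh Mh :=
        ⟨le_trans (Metric.infDist_le_dist_of_mem hyM) hzy, hzg⟩
      exact ⟨le_trans (Metric.infDist_le_dist_of_mem hzI) hxz, hxg⟩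
end
end

section
/- Let m ≥ 1, let ρ̌ > 0 and ρ̂ > 0 with ρ̂/ρ̌ an even integer ≥ 2. Then there is no pair of maps R' from the nonempty subsets of Δ_ρ̌ to the nonempty subsets of Δ_ρ̂ and I' from the nonempty subsets of Δ_ρ̂ to the nonempty subsets of Δ_ρ̌ such that simultaneously: (a) B_{ρ̌/2}(M̌) ⊆ B_{ρ̂/2}(R'(M̌)) for every nonempty M̌ ⊆ Δ_ρ̌; (b) B_{ρ̂/2}(M̂) ⊆ B_{ρ̌/2}(I'(M̂)) for every nonempty M̂ ⊆ Δ_ρ̂; and (c) R'(I'(M̂)) = M̂ for every nonempty M̂ ⊆ Δ_ρ̂. -/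
noncomputable section

/-- Distinct points of the grid `Δ_ρ` are at distance at least `ρ` apart. -/
lemma grid_dist (m : ℕ) {rc : ℝ} (hrc : 0 < rc) {x z : Fin m → ℝ}
    (hx : x ∈ grid m rc) (hz : z ∈ grid m rc) (hne : x ≠ z) : rc ≤ dist x z := by
  obtain ⟨j, hj⟩ := Function.ne_iff.mp hne
  obtain ⟨k1, hk1⟩ := hx j
  obtain ⟨k2, hk2⟩ := hz j
  have h1 : dist (x j) (z j) ≤ dist x z := dist_le_pi_dist x z j
  have hkne : k1 ≠ k2 := by rintro rfl; exact hj (hk1.trans hk2.symm)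
  have h2 : rc ≤ dist (x j) (z j) := by
    rw [Real.dist_eq, hk1, hk2, ← mul_sub, abs_mul, abs_of_pos hrc]
    have h3 : (1:ℤ) ≤ |k1 - k2| := Int.one_le_abs (sub_ne_zero.mpr hkne)
    have h4 : (1:ℝ) ≤ |(k1:ℝ) - (k2:ℝ)| := by exact_mod_cast h3
    nlinarith
  linarith

theorem stmt19 (m : ℕ) (hm : 1 ≤ m) (rc rh : ℝ) (hrc : 0 < rc) (hrh : 0 < rh)
    (n : ℕ) (hn : 2 ≤ n) (heven : Even n) (hq : rh = (n : ℝ) * rc) :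
    ¬ ∃ R' I' : Set (Fin m → ℝ) → Set (Fin m → ℝ),
      -- `R'` maps nonempty subsets of `Δ_ρ̌` to nonempty subsets of `Δ_ρ̂`
      (∀ Mc : Set (Fin m → ℝ), Mc ⊆ grid m rc → Mc.Nonempty →
        R' Mc ⊆ grid m rh ∧ (R' Mc).Nonempty) ∧
      -- `I'` maps nonempty subsets of `Δ_ρ̂` to nonempty subsets of `Δ_ρ̌`
      (∀ Mh : Set (Fin m → ℝ), Mh ⊆ grid m rh → Mh.Nonempty →
        I' Mh ⊆ grid m rc ∧ (I' Mh).Nonempty) ∧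
      -- (a) `R'(M̌)` is a Voronoi cover of `M̌` in `Δ_ρ̂`
      (∀ Mc : Set (Fin m → ℝ), Mc ⊆ grid m rc → Mc.Nonempty →
        nbhd m (rc / 2) Mc ⊆ nbhd m (rh / 2) (R' Mc)) ∧
      -- (b) `I'(M̂)` is a Voronoi cover of `M̂` in `Δ_ρ̌`
      (∀ Mh : Set (Fin m → ℝ), Mh ⊆ grid m rh → Mh.Nonempty →
        nbhd m (rh / 2) Mh ⊆ nbhd m (rc / 2) (I' Mh)) ∧
      -- (c) `R' ∘ I' = id` on the nonempty subsets of `Δ_ρ̂`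
      (∀ Mh : Set (Fin m → ℝ), Mh ⊆ grid m rh → Mh.Nonempty →
        R' (I' Mh) = Mh) := by
  rintro ⟨R', I', _hR, hI, ha, hb, hc⟩
  obtain ⟨r, hr⟩ := heven
  have hrn : rh / 2 = rc * r := by
    rw [hq, hr]; push_cast; ring
  -- the coarse grid point 0
  set z0 : Fin m → ℝ := fun _ => 0 with hz0
  have hz0g : z0 ∈ grid m rh := fun j => ⟨0, by simp [hz0]⟩
  set M0 : Set (Fin m → ℝ) := {z0} with hM0
  have hM0sub : M0 ⊆ grid m rh := by rintro _ rfl; exact hz0g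
  have hM0ne : M0.Nonempty := ⟨z0, rfl⟩
  obtain ⟨hIg, hIne⟩ := hI M0 hM0sub hM0ne
  -- the fine grid point x = (rh/2, ..., rh/2)
  set x : Fin m → ℝ := fun _ => rh / 2 with hx
  have hxg : x ∈ grid m rc := fun j => ⟨r, by simp [hx, hrn]⟩
  -- x ∈ nbhd (rh/2) M0
  have hxd : dist x z0 ≤ rh / 2 := by
    rw [dist_pi_le_iff (by positivity)]
    intro j
    simp only [hx, hz0, Real.dist_eq, sub_zero]
    rw [abs_of_nonneg (by positivity)]
  have hxn : x ∈ nbhd m (rh / 2) M0 := by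
    simpa [nbhd, hM0, Metric.infDist_singleton] using hxd
  have hxI : Metric.infDist x (I' M0) ≤ rc / 2 := hb M0 hM0sub hM0ne hxn
  -- x ∈ I' M0
  have hxmem : x ∈ I' M0 := by
    have hlt : Metric.infDist x (I' M0) < rc := lt_of_le_of_lt hxI (by linarith)
    obtain ⟨z, hz, hdz⟩ := (Metric.infDist_lt_iff hIne).mp hlt
    by_contra hxm
    exact absurd hdz (not_lt.mpr (grid_dist m hrc hxg (hIg hz) (fun h => hxm (h ▸ hz))))
  -- the point y = x + rc/2 in every coordinate
  set y : Fin m → ℝ := fun _ => rh / 2 + rc / 2 with hy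
  have hyd : dist y x ≤ rc / 2 := by
    rw [dist_pi_le_iff (by positivity)]
    intro j
    simp only [hx, hy, Real.dist_eq, add_sub_cancel_left]
    rw [abs_of_nonneg (by positivity)]
  have hyn : y ∈ nbhd m (rc / 2) (I' M0) :=
    le_trans (Metric.infDist_le_dist_of_mem hxmem) hyd
  have hyn2 : y ∈ nbhd m (rh / 2) (R' (I' M0)) := ha (I' M0) hIg hIne hyn
  rw [hc M0 hM0sub hM0ne] at hyn2
  have : dist y z0 ≤ rh / 2 := by
    simpa [nbhd, hM0, Metric.infDist_singleton] using hyn2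
  have hj : dist (y ⟨0, hm⟩) (z0 ⟨0, hm⟩) ≤ dist y z0 := dist_le_pi_dist y z0 ⟨0, hm⟩
  rw [hy, hz0] at hj
  simp only [Real.dist_eq, sub_zero] at hj
  rw [abs_of_nonneg (by positivity)] at hj
  linarith
end
end
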